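/- arXiv:1810.13328 — 3 statements merged into one kernel-verified Lean document; each statement's English description precedes it below -/
import Mathlib

section
/- Let G be a finite, simple, connected graph with at least one edge, with χ(G) = 2 and ζ(G) > 0. Then the chromatic completion edge set E_χ(G) is unique: every Lucky colouring of G yields the same set of pairs of distinct non-adjacent vertices receiving distinct colours. -/
/-- A proper vertex colouring of `G`: adjacent vertices get distinct colours. -/
def IsProperColoring {V : Type} (G : SimpleGraph V) (c : V → ℕ) : Prop :=
  ∀ u v : V, G.Adj u v → c u ≠ c v

/-- The number of colours used by a colouring. -/
def colorCount {V : Type} [Fintype V] (c : V → ℕ) : ℕ :=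
  (Finset.univ.image c).card

/-- A chromatic colouring: a proper colouring using exactly `χ(G)` colours,
i.e. a proper colouring using the minimum possible number of colours. -/
def IsChromaticColoring {V : Type} [Fintype V] (G : SimpleGraph V) (c : V → ℕ) : Prop :=
  IsProperColoring G c ∧
    ∀ c' : V → ℕ, IsProperColoring G c' → colorCount c ≤ colorCount c'

/-- The chromatic completion edges of a colouring `c`: all unordered pairs of
distinct non-adjacent vertices receiving distinct colours. -/
def completionEdges {V : Type} (G : SimpleGraph V) (c : V → ℕ) : Set (Sym2 V) :=
  {e | ∃ u v : V, e = s(u, v) ∧ u ≠ v ∧ ¬ G.Adj u v ∧ c u ≠ c v}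

/-- The completion count `N(c)`. -/
noncomputable def completionCount {V : Type} (G : SimpleGraph V) (c : V → ℕ) : ℕ :=
  (completionEdges G c).ncard

/-- The chromatic completion number `ζ(G)`. -/
noncomputable def zeta {V : Type} [Fintype V] (G : SimpleGraph V) : ℕ :=
  sSup {n | ∃ c : V → ℕ, IsChromaticColoring G c ∧ completionCount G c = n}

/-- A Lucky colouring: a chromatic colouring attaining `ζ(G)`. -/
def IsLucky {V : Type} [Fintype V] (G : SimpleGraph V) (c : V → ℕ) : Prop :=
  IsChromaticColoring G c ∧ completionCount G c = zeta G

/-- `G` is stable in respect of chromatic completion: all Lucky colourings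
induce the same partition of the vertex set into colour classes. -/
def SCC {V : Type} [Fintype V] (G : SimpleGraph V) : Prop :=
  ∀ c₁ c₂ : V → ℕ, IsLucky G c₁ → IsLucky G c₂ →
    ∀ u v : V, (c₁ u = c₁ v ↔ c₂ u = c₂ v)


lemma two_valued_aux {V : Type} [Fintype V] (c : V → ℕ) (h : colorCount c = 2) :
    ∀ x y z : V, c x ≠ c z → c y ≠ c z → c x = c y := by
  obtain ⟨a, b, hab, hs⟩ := Finset.card_eq_two.mp h
  have mem : ∀ v, c v = a ∨ c v = b := by
    intro v
    have : c v ∈ Finset.univ.image c := Finset.mem_image_of_mem _ (Finset.mem_univ v)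
    rw [hs] at this
    simpa using this
  intro x y z hx hy
  rcases mem x with h1 | h1 <;> rcases mem y with h2 | h2 <;> rcases mem z with h3 | h3 <;> omega

lemma walk_parity_aux {V : Type} (G : SimpleGraph V) (c : V → ℕ)
    (hp : IsProperColoring G c)
    (htv : ∀ x y z : V, c x ≠ c z → c y ≠ c z → c x = c y) :
    ∀ {u v : V} (p : G.Walk u v), (c u = c v ↔ Even p.length) := by
  intro u v p
  induction p with
  | nil => simp
  | @cons u w v h p ih =>
    have huw : c u ≠ c w := hp _ _ h
    simp only [SimpleGraph.Walk.length_cons, Nat.even_add_one]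
    constructor
    · intro heq hev
      exact huw (heq.trans (ih.mpr hev).symm)
    · intro hne
      have hvw : c v ≠ c w := fun h' => hne (ih.mp h'.symm)
      exact htv u v w huw hvw

/-- For a finite, simple, connected graph `G` with at least one edge,
`χ(G) = 2` and `ζ(G) > 0`, the chromatic completion edge set is unique: every
Lucky colouring yields the same set of completion edges. -/
theorem unique_completion_edges_of_two_colorable {V : Type} [Fintype V]
    (G : SimpleGraph V) (hconn : G.Connected) (hedge : G.edgeSet.Nonempty)
    (hchi : ∃ c : V → ℕ, IsChromaticColoring G c ∧ colorCount c = 2)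
    (hzeta : 0 < zeta G) :
    ∀ c₁ c₂ : V → ℕ, IsLucky G c₁ → IsLucky G c₂ →
      completionEdges G c₁ = completionEdges G c₂ := by
  intro c₁ c₂ h₁ h₂
  obtain ⟨c₀, hc₀, hcount⟩ := hchi
  have hcc : ∀ c : V → ℕ, IsChromaticColoring G c → colorCount c = 2 := by
    intro c hc
    have hle : colorCount c ≤ 2 := hcount ▸ hc.2 c₀ hc₀.1
    obtain ⟨e, he⟩ := hedge
    induction e using Sym2.ind with
    | _ u v =>
      have hadj : G.Adj u v := he
      have hne : c u ≠ c v := hc.1 u v hadj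
      have h2 : ({c u, c v} : Finset ℕ) ⊆ Finset.univ.image c := by
        intro x hx
        simp only [Finset.mem_insert, Finset.mem_singleton] at hx
        rcases hx with rfl | rfl <;> exact Finset.mem_image_of_mem _ (Finset.mem_univ _)
      have hge : 2 ≤ colorCount c := by
        have := Finset.card_le_card h2
        rwa [Finset.card_insert_of_notMem (by simpa using hne), Finset.card_singleton] at this
      omega
  have tv1 := two_valued_aux c₁ (hcc c₁ h₁.1)
  have tv2 := two_valued_aux c₂ (hcc c₂ h₂.1)
  have key : ∀ u v : V, (c₁ u ≠ c₁ v ↔ c₂ u ≠ c₂ v) := by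
    intro u v
    obtain ⟨p⟩ := hconn.preconnected u v
    have e1 := walk_parity_aux G c₁ h₁.1.1 tv1 p
    have e2 := walk_parity_aux G c₂ h₂.1.1 tv2 p
    rw [not_iff_not, e1, e2]
  ext e
  simp only [completionEdges, Set.mem_setOf_eq]
  constructor
  · rintro ⟨u, v, rfl, hne, hadj, hcol⟩
    exact ⟨u, v, rfl, hne, hadj, (key u v).mp hcol⟩
  · rintro ⟨u, v, rfl, hne, hadj, hcol⟩
    exact ⟨u, v, rfl, hne, hadj, (key u v).mpr hcol⟩
end

section
/- Let G and H be finite simple graphs (each with at least one edge), and fix a Lucky colouring of G using colours c_1, …, c_{χ(G)} with class sizes θ_G(c_i) and a Lucky colouring of H using colours c_1, …, c_{χ(H)} with class sizes θ_H(c_j). Then the disjoint union satisfies ζ(G ∪ H) ≥ ζ(G) + ζ(H) + ∑_{i=1}^{χ(G)} ∑_{j=1, j≠i}^{χ(H)} θ_G(c_i)·θ_H(c_j). -/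
/-- `θ(c_i)`: the number of vertices receiving colour `i` under `c`. -/
def theta {V : Type} [Fintype V] (c : V → ℕ) (i : ℕ) : ℕ :=
  (Finset.univ.filter (fun v => c v = i)).card

/-- `∑_{i < j} θ(c_i)·θ(c_j)`, the sum over unordered pairs of distinct colours
used by `c` of the products of the colour class sizes. -/
def pairProdSum {V : Type} [Fintype V] (c : V → ℕ) : ℕ :=
  ∑ p ∈ ((Finset.univ.image c) ×ˢ (Finset.univ.image c)).filter
      (fun p : ℕ × ℕ => p.1 < p.2), theta c p.1 * theta c p.2


open Finset in
private lemma count_pairs_aux {V W : Type} [Fintype V] [Fintype W] (cG : V → ℕ) (cH : W → ℕ)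
    (nG nH : ℕ) (hG : ∀ v, cG v < nG) (hH : ∀ w, cH w < nH) :
    (Finset.univ.filter (fun p : V × W => cG p.1 ≠ cH p.2)).card
      = ∑ i ∈ Finset.range nG, ∑ j ∈ Finset.range nH,
          if i ≠ j then theta cG i * theta cH j else 0 := by
  classical
  rw [Finset.card_eq_sum_card_fiberwise
    (f := fun p : V × W => (cG p.1, cH p.2))
    (t := (Finset.range nG ×ˢ Finset.range nH).filter fun q => q.1 ≠ q.2)
    (by intro p hp; simp only [Finset.mem_coe, mem_filter, mem_product, mem_range] at *
        exact ⟨⟨hG _, hH _⟩, hp.2⟩)]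
  rw [Finset.sum_filter, Finset.sum_product]
  refine Finset.sum_congr rfl fun i _ => Finset.sum_congr rfl fun j _ => ?_
  split_ifs with hij
  · have : (Finset.univ.filter (fun p : V × W => cG p.1 ≠ cH p.2)).filter
        (fun p => (cG p.1, cH p.2) = (i, j))
        = Finset.univ.filter (fun p : V × W => cG p.1 = i ∧ cH p.2 = j) := by
      ext p
      simp only [mem_filter, mem_univ, true_and, Prod.mk.injEq]
      constructor
      · rintro ⟨-, h1, h2⟩; exact ⟨h1, h2⟩
      · rintro ⟨h1, h2⟩; exact ⟨by rw [h1, h2]; exact hij, h1, h2⟩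
    rw [this, theta, theta, ← Finset.card_product, ← Finset.filter_product,
      Finset.univ_product_univ]
  · rfl

/-- For graphs `G` and `H` with fixed Lucky colourings using colours
`0, …, χ(G) − 1` and `0, …, χ(H) − 1` respectively,
`ζ(G ∪ H) ≥ ζ(G) + ζ(H) + ∑_{i=1}^{χ(G)} ∑_{j≠i} θ_G(c_i)·θ_H(c_j)`. -/
theorem zeta_disjoint_union_lower_bound {V W : Type} [Fintype V] [Fintype W]
    (G : SimpleGraph V) (H : SimpleGraph W)
    (hG : G.edgeSet.Nonempty) (hH : H.edgeSet.Nonempty)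
    (cG : V → ℕ) (cH : W → ℕ) (hcG : IsLucky G cG) (hcH : IsLucky H cH)
    (hrG : Finset.univ.image cG = Finset.range (colorCount cG))
    (hrH : Finset.univ.image cH = Finset.range (colorCount cH)) :
    zeta G + zeta H +
      ∑ i ∈ Finset.range (colorCount cG), ∑ j ∈ Finset.range (colorCount cH),
        (if i ≠ j then theta cG i * theta cH j else 0)
      ≤ zeta (G ⊕g H) := by
  classical
  set nG := colorCount cG with hnG
  set nH := colorCount cH with hnH
  set c : V ⊕ W → ℕ := Sum.elim cG cH with hc
  have hGv : ∀ v, cG v < nG := fun v => by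
    have h := Finset.mem_image_of_mem cG (Finset.mem_univ v)
    rw [hrG] at h; exact Finset.mem_range.mp h
  have hHw : ∀ w, cH w < nH := fun w => by
    have h := Finset.mem_image_of_mem cH (Finset.mem_univ w)
    rw [hrH] at h; exact Finset.mem_range.mp h
  -- proper colouring of the sum
  have hproper : IsProperColoring (G ⊕g H) c := by
    intro u v huv
    rcases u with a | a <;> rcases v with b | b
    · exact hcG.1.1 a b (by simpa [SimpleGraph.sum_adj] using huv)
    · simp [SimpleGraph.sum_adj] at huv
    · simp [SimpleGraph.sum_adj] at huv
    · exact hcH.1.1 a b (by simpa [SimpleGraph.sum_adj] using huv)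
  -- colour count of the sum colouring
  have himg : Finset.univ.image c = Finset.range (max nG nH) := by
    ext x
    simp only [Finset.mem_image, Finset.mem_univ, true_and, Finset.mem_range, lt_max_iff]
    constructor
    · rintro ⟨u, rfl⟩
      rcases u with a | a
      · exact Or.inl (hGv a)
      · exact Or.inr (hHw a)
    · rintro (hx | hx)
      · have h : x ∈ Finset.univ.image cG := by rw [hrG]; exact Finset.mem_range.mpr hx
        obtain ⟨v, -, rfl⟩ := Finset.mem_image.mp h
        exact ⟨Sum.inl v, rfl⟩
      · have h : x ∈ Finset.univ.image cH := by rw [hrH]; exact Finset.mem_range.mpr hx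
        obtain ⟨w, -, rfl⟩ := Finset.mem_image.mp h
        exact ⟨Sum.inr w, rfl⟩
  have hcc : colorCount c = max nG nH := by rw [colorCount, himg, Finset.card_range]
  -- chromatic colouring
  have hchrom : IsChromaticColoring (G ⊕g H) c := by
    refine ⟨hproper, fun c' hc' => ?_⟩
    have hl : IsProperColoring G (c' ∘ Sum.inl) := fun u v h =>
      hc' (Sum.inl u) (Sum.inl v) (by simpa [SimpleGraph.sum_adj] using h)
    have hr : IsProperColoring H (c' ∘ Sum.inr) := fun u v h =>
      hc' (Sum.inr u) (Sum.inr v) (by simpa [SimpleGraph.sum_adj] using h)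
    have h1 : nG ≤ colorCount (c' ∘ Sum.inl) := hcG.1.2 _ hl
    have h2 : nH ≤ colorCount (c' ∘ Sum.inr) := hcH.1.2 _ hr
    have h3 : colorCount (c' ∘ Sum.inl) ≤ colorCount c' := by
      apply Finset.card_le_card
      intro x hx
      obtain ⟨v, -, rfl⟩ := Finset.mem_image.mp hx
      exact Finset.mem_image_of_mem _ (Finset.mem_univ (Sum.inl v))
    have h4 : colorCount (c' ∘ Sum.inr) ≤ colorCount c' := by
      apply Finset.card_le_card
      intro x hx
      obtain ⟨w, -, rfl⟩ := Finset.mem_image.mp hx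
      exact Finset.mem_image_of_mem _ (Finset.mem_univ (Sum.inr w))
    rw [hcc]; exact max_le (h1.trans h3) (h2.trans h4)
  -- decomposition of the completion edges
  set A : Set (Sym2 (V ⊕ W)) := Sym2.map Sum.inl '' completionEdges G cG with hAdef
  set B : Set (Sym2 (V ⊕ W)) := Sym2.map Sum.inr '' completionEdges H cH with hBdef
  set C : Set (Sym2 (V ⊕ W)) :=
    (fun p : V × W => s(Sum.inl p.1, Sum.inr p.2)) '' {p : V × W | cG p.1 ≠ cH p.2} with hCdef
  have hdecomp : completionEdges (G ⊕g H) c = (A ∪ B) ∪ C := by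
    ext e
    constructor
    · rintro ⟨u, v, rfl, huv, hadj, hne⟩
      rcases u with a | a <;> rcases v with b | b
      · exact Or.inl (Or.inl ⟨s(a, b), ⟨a, b, rfl, by simpa using huv,
          by simpa [SimpleGraph.sum_adj] using hadj, by simpa [hc] using hne⟩,
          by rw [Sym2.map_pair_eq]⟩)
      · exact Or.inr ⟨(a, b), by simpa [hc] using hne, rfl⟩
      · exact Or.inr ⟨(b, a), Ne.symm (by simpa [hc] using hne), Sym2.eq_swap⟩
      · exact Or.inl (Or.inr ⟨s(a, b), ⟨a, b, rfl, by simpa using huv,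
          by simpa [SimpleGraph.sum_adj] using hadj, by simpa [hc] using hne⟩,
          by rw [Sym2.map_pair_eq]⟩)
    · rintro ((⟨e', ⟨a, b, rfl, hab, hadj, hne⟩, rfl⟩ | ⟨e', ⟨a, b, rfl, hab, hadj, hne⟩, rfl⟩)
        | ⟨⟨a, b⟩, hne, rfl⟩)
      · exact ⟨Sum.inl a, Sum.inl b, by rw [Sym2.map_pair_eq], by simpa using hab,
          by simpa [SimpleGraph.sum_adj] using hadj, by simpa [hc] using hne⟩
      · exact ⟨Sum.inr a, Sum.inr b, by rw [Sym2.map_pair_eq], by simpa using hab,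
          by simpa [SimpleGraph.sum_adj] using hadj, by simpa [hc] using hne⟩
      · exact ⟨Sum.inl a, Sum.inr b, rfl, by simp,
          by simp [SimpleGraph.sum_adj], by simpa [hc] using hne⟩
  -- disjointness
  have dAB : Disjoint A B := by
    rw [Set.disjoint_left]
    rintro e ⟨e1, ⟨a, b, rfl, -, -, -⟩, rfl⟩ ⟨e2, ⟨x, y, rfl, -, -, -⟩, h⟩
    rw [Sym2.map_pair_eq, Sym2.map_pair_eq, Sym2.eq_iff] at h
    rcases h with ⟨h, -⟩ | ⟨h, -⟩ <;> cases h
  have dABC : Disjoint (A ∪ B) C := by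
    rw [Set.disjoint_left]
    rintro e (⟨e1, ⟨a, b, rfl, -, -, -⟩, rfl⟩ | ⟨e1, ⟨a, b, rfl, -, -, -⟩, rfl⟩) ⟨⟨x, y⟩, -, h⟩
    · rw [Sym2.map_pair_eq, Sym2.eq_iff] at h
      rcases h with ⟨-, h⟩ | ⟨-, h⟩ <;> cases h
    · rw [Sym2.map_pair_eq, Sym2.eq_iff] at h
      rcases h with ⟨h, -⟩ | ⟨h, -⟩ <;> cases h
  -- cardinalities
  have hA : A.ncard = completionCount G cG :=
    Set.ncard_image_of_injective _ (Sym2.map.injective Sum.inl_injective)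
  have hB : B.ncard = completionCount H cH :=
    Set.ncard_image_of_injective _ (Sym2.map.injective Sum.inr_injective)
  have hCinj : Function.Injective (fun p : V × W => s(Sum.inl p.1, Sum.inr p.2)) := by
    rintro ⟨a, b⟩ ⟨x, y⟩ h
    simp only [Sym2.eq_iff] at h
    rcases h with ⟨h1, h2⟩ | ⟨h1, -⟩
    · simp_all
    · cases h1
  have hC : C.ncard = ∑ i ∈ Finset.range nG, ∑ j ∈ Finset.range nH,
      if i ≠ j then theta cG i * theta cH j else 0 := by
    rw [hCdef, Set.ncard_image_of_injective _ hCinj,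
      ← count_pairs_aux cG cH nG nH hGv hHw, ← Set.ncard_coe_finset]
    congr 1
    ext p
    simp
  have hcount : completionCount (G ⊕g H) c
      = zeta G + zeta H + ∑ i ∈ Finset.range nG, ∑ j ∈ Finset.range nH,
          if i ≠ j then theta cG i * theta cH j else 0 := by
    rw [completionCount, hdecomp, Set.ncard_union_eq dABC, Set.ncard_union_eq dAB,
      hA, hB, hC, hcG.2, hcH.2]
  rw [← hcount, zeta]
  refine le_csSup ⟨Nat.card (Sym2 (V ⊕ W)), ?_⟩ ⟨c, hchrom, rfl⟩
  rintro n ⟨c', -, rfl⟩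
  rw [completionCount, ← Set.ncard_univ]
  exact Set.ncard_le_ncard (Set.subset_univ _) Set.finite_univ
end

section
/- Let G and H be finite simple graphs. Then the join satisfies ζ(G + H) = ζ(G) + ζ(H). In particular, ζ(K_1 + H) = ζ(H) for every graph H. -/
/-- The join `G + H`: the disjoint union of `G` and `H` together with all edges
between vertices of `G` and vertices of `H`. -/
def graphJoin {V W : Type} (G : SimpleGraph V) (H : SimpleGraph W) :
    SimpleGraph (V ⊕ W) where
  Adj x y :=
    match x, y with
    | Sum.inl a, Sum.inl b => G.Adj a b
    | Sum.inr a, Sum.inr b => H.Adj a b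
    | Sum.inl _, Sum.inr _ => True
    | Sum.inr _, Sum.inl _ => True
  symm := ⟨by
    rintro (a | a) (b | b) h
    · exact h.symm
    · trivial
    · trivial
    · exact h.symm⟩
  loopless := ⟨by
    rintro (a | a) h
    · exact G.irrefl h
    · exact H.irrefl h⟩

section Aux

variable {V W : Type} [Fintype V] [Fintype W]

private lemma exists_chromatic (G : SimpleGraph V) : ∃ c, IsChromaticColoring G c := by
  classical
  have hne : {n | ∃ c, IsProperColoring G c ∧ colorCount c = n}.Nonempty := by
    refine ⟨_, fun v => ((Fintype.equivFin V) v : ℕ), fun u v h huv => ?_, rfl⟩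
    exact G.ne_of_adj h ((Fintype.equivFin V).injective (Fin.val_injective huv))
  obtain ⟨c, hc, hcc⟩ := Nat.sInf_mem hne
  exact ⟨c, hc, fun c' hc' => hcc ▸ Nat.sInf_le ⟨c', hc', rfl⟩⟩

private lemma zetaSet_nonempty (G : SimpleGraph V) :
    {n | ∃ c, IsChromaticColoring G c ∧ completionCount G c = n}.Nonempty := by
  obtain ⟨c, hc⟩ := exists_chromatic G
  exact ⟨_, c, hc, rfl⟩

private lemma zetaSet_bdd (G : SimpleGraph V) :
    BddAbove {n | ∃ c, IsChromaticColoring G c ∧ completionCount G c = n} := by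
  refine ⟨Nat.card (Sym2 V), ?_⟩
  rintro n ⟨c, _, rfl⟩
  calc completionCount G c ≤ (Set.univ : Set (Sym2 V)).ncard :=
        Set.ncard_le_ncard (Set.subset_univ _) Set.finite_univ
    _ = Nat.card (Sym2 V) := Set.ncard_univ _

private lemma exists_lucky (G : SimpleGraph V) : ∃ c, IsLucky G c := by
  obtain ⟨c, hc, h⟩ := Nat.sSup_mem (zetaSet_nonempty G) (zetaSet_bdd G)
  exact ⟨c, hc, h⟩

private lemma colorCount_shift (c : W → ℕ) (N : ℕ) :
    colorCount (fun w => c w + N) = colorCount c := by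
  classical
  unfold colorCount
  have h : (Finset.univ.image fun w => c w + N) = (Finset.univ.image c).image (· + N) := by
    rw [Finset.image_image]; rfl
  rw [h, Finset.card_image_of_injective _ (add_left_injective N)]

variable {G : SimpleGraph V} {H : SimpleGraph W}

private lemma proper_inl {c : V ⊕ W → ℕ} (hc : IsProperColoring (graphJoin G H) c) :
    IsProperColoring G (c ∘ Sum.inl) := fun u v h => hc _ _ h

private lemma proper_inr {c : V ⊕ W → ℕ} (hc : IsProperColoring (graphJoin G H) c) :
    IsProperColoring H (c ∘ Sum.inr) := fun u v h => hc _ _ h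

private lemma cross_ne {c : V ⊕ W → ℕ} (hc : IsProperColoring (graphJoin G H) c) :
    ∀ v w, c (Sum.inl v) ≠ c (Sum.inr w) := fun v w => hc (Sum.inl v) (Sum.inr w) trivial

private lemma colorCount_sum (c : V ⊕ W → ℕ)
    (hdisj : ∀ v w, c (Sum.inl v) ≠ c (Sum.inr w)) :
    colorCount c = colorCount (c ∘ Sum.inl) + colorCount (c ∘ Sum.inr) := by
  classical
  unfold colorCount
  have himg : (Finset.univ : Finset (V ⊕ W)).image c
      = (Finset.univ.image (c ∘ Sum.inl)) ∪ (Finset.univ.image (c ∘ Sum.inr)) := by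
    ext n
    simp only [Finset.mem_image, Finset.mem_union, Finset.mem_univ, true_and,
      Function.comp_apply]
    constructor
    · rintro ⟨(v | w), rfl⟩
      · exact Or.inl ⟨v, rfl⟩
      · exact Or.inr ⟨w, rfl⟩
    · rintro (⟨v, rfl⟩ | ⟨w, rfl⟩)
      · exact ⟨Sum.inl v, rfl⟩
      · exact ⟨Sum.inr w, rfl⟩
  rw [himg, Finset.card_union_of_disjoint]
  rw [Finset.disjoint_left]
  rintro n hn hn'
  simp only [Finset.mem_image, Finset.mem_univ, true_and, Function.comp_apply] at hn hn'
  obtain ⟨v, hv⟩ := hn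
  obtain ⟨w, hw⟩ := hn'
  exact hdisj v w (hv.trans hw.symm)

/-- Combine colourings of `V` and `W`, shifting the `W`-colours out of the way. -/
private def combine (cV : V → ℕ) (cW : W → ℕ) : V ⊕ W → ℕ :=
  Sum.elim cV (fun w => cW w + (Finset.univ.sup cV + 1))

private lemma combine_cross (cV : V → ℕ) (cW : W → ℕ) :
    ∀ v w, combine cV cW (Sum.inl v) ≠ combine cV cW (Sum.inr w) := by
  intro v w
  have h1 : cV v ≤ Finset.univ.sup cV := Finset.le_sup (Finset.mem_univ v)
  have : cV v < cW w + (Finset.univ.sup cV + 1) := by omega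
  exact Nat.ne_of_lt this

private lemma combine_proper (hV : IsProperColoring G cV) (hW : IsProperColoring H cW) :
    IsProperColoring (graphJoin G H) (combine cV cW) := by
  rintro (a | a) (b | b) h
  · exact hV a b h
  · exact combine_cross cV cW a b
  · exact (combine_cross cV cW b a).symm
  · simpa [combine] using hW a b h

private lemma combine_colorCount (cV : V → ℕ) (cW : W → ℕ) :
    colorCount (combine cV cW) = colorCount cV + colorCount cW := by
  rw [colorCount_sum _ (combine_cross cV cW)]
  have h1 : combine cV cW ∘ Sum.inl = cV := rfl
  have h2 : combine cV cW ∘ Sum.inr = fun w => cW w + (Finset.univ.sup cV + 1) := rfl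
  rw [h1, h2, colorCount_shift]

private lemma completionEdges_join (G : SimpleGraph V) (H : SimpleGraph W) (c : V ⊕ W → ℕ) :
    completionEdges (graphJoin G H) c =
      (Sym2.map Sum.inl) '' completionEdges G (c ∘ Sum.inl) ∪
      (Sym2.map Sum.inr) '' completionEdges H (c ∘ Sum.inr) := by
  ext e
  constructor
  · rintro ⟨(a | a), (b | b), rfl, hne, hadj, hcol⟩
    · exact Or.inl ⟨s(a, b), ⟨a, b, rfl, fun h => hne (by rw [h]), hadj, hcol⟩, rfl⟩
    · exact absurd trivial hadj
    · exact absurd trivial hadj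
    · exact Or.inr ⟨s(a, b), ⟨a, b, rfl, fun h => hne (by rw [h]), hadj, hcol⟩, rfl⟩
  · rintro (⟨e', ⟨a, b, rfl, hne, hadj, hcol⟩, rfl⟩ | ⟨e', ⟨a, b, rfl, hne, hadj, hcol⟩, rfl⟩)
    · exact ⟨Sum.inl a, Sum.inl b, rfl, by simpa using hne, hadj, hcol⟩
    · exact ⟨Sum.inr a, Sum.inr b, rfl, by simpa using hne, hadj, hcol⟩

private lemma completionCount_join (G : SimpleGraph V) (H : SimpleGraph W) (c : V ⊕ W → ℕ) :
    completionCount (graphJoin G H) c =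
      completionCount G (c ∘ Sum.inl) + completionCount H (c ∘ Sum.inr) := by
  classical
  have hdisj : Disjoint ((Sym2.map Sum.inl) '' completionEdges G (c ∘ Sum.inl))
      ((Sym2.map Sum.inr) '' completionEdges H (c ∘ Sum.inr)) := by
    rw [Set.disjoint_left]
    rintro e ⟨e1, _, rfl⟩ ⟨e2, _, heq⟩
    induction e1 using Sym2.ind with | _ a b =>
    induction e2 using Sym2.ind with | _ a' b' =>
    simp [Sym2.map_pair_eq, Sym2.eq_iff] at heq
  unfold completionCount
  rw [completionEdges_join, Set.ncard_union_eq hdisj (Set.toFinite _) (Set.toFinite _),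
    Set.ncard_image_of_injective _ (Sym2.map.injective Sum.inl_injective),
    Set.ncard_image_of_injective _ (Sym2.map.injective Sum.inr_injective)]

private lemma completionEdges_shift (H : SimpleGraph W) (c : W → ℕ) (N : ℕ) :
    completionEdges H (fun w => c w + N) = completionEdges H c := by
  ext e
  simp only [completionEdges, Set.mem_setOf_eq, ne_eq, Nat.add_right_cancel_iff]

private lemma combine_completionCount (cV : V → ℕ) (cW : W → ℕ) :
    completionCount (graphJoin G H) (combine cV cW) =
      completionCount G cV + completionCount H cW := by
  rw [completionCount_join]
  have h1 : combine cV cW ∘ Sum.inl = cV := rfl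
  have h2 : combine cV cW ∘ Sum.inr = fun w => cW w + (Finset.univ.sup cV + 1) := rfl
  rw [h1, h2]
  unfold completionCount
  rw [completionEdges_shift]

private lemma chromatic_restrict (c : V ⊕ W → ℕ)
    (hc : IsChromaticColoring (graphJoin G H) c) :
    IsChromaticColoring G (c ∘ Sum.inl) ∧ IsChromaticColoring H (c ∘ Sum.inr) := by
  obtain ⟨hp, hmin⟩ := hc
  have hsplit := colorCount_sum c (cross_ne hp)
  constructor
  · refine ⟨proper_inl hp, fun c' hc' => ?_⟩
    have h1 := hmin (combine c' (c ∘ Sum.inr)) (combine_proper hc' (proper_inr hp))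
    rw [combine_colorCount] at h1
    omega
  · refine ⟨proper_inr hp, fun c' hc' => ?_⟩
    have h1 := hmin (combine (c ∘ Sum.inl) c') (combine_proper (proper_inl hp) hc')
    rw [combine_colorCount] at h1
    omega

private lemma combine_chromatic (hV : IsChromaticColoring G cV)
    (hW : IsChromaticColoring H cW) :
    IsChromaticColoring (graphJoin G H) (combine cV cW) := by
  refine ⟨combine_proper hV.1 hW.1, fun c' hc' => ?_⟩
  rw [combine_colorCount, colorCount_sum c' (cross_ne hc')]
  exact Nat.add_le_add (hV.2 _ (proper_inl hc')) (hW.2 _ (proper_inr hc'))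

private lemma zeta_join_aux (G : SimpleGraph V) (H : SimpleGraph W) :
    zeta (graphJoin G H) = zeta G + zeta H := by
  apply le_antisymm
  · apply csSup_le (zetaSet_nonempty _)
    rintro n ⟨c, hc, rfl⟩
    obtain ⟨hV, hW⟩ := chromatic_restrict c hc
    rw [completionCount_join]
    exact Nat.add_le_add (le_csSup (zetaSet_bdd G) ⟨_, hV, rfl⟩)
      (le_csSup (zetaSet_bdd H) ⟨_, hW, rfl⟩)
  · obtain ⟨cV, hV, hVz⟩ := exists_lucky G
    obtain ⟨cW, hW, hWz⟩ := exists_lucky H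
    have h := le_csSup (zetaSet_bdd (graphJoin G H))
      ⟨combine cV cW, combine_chromatic hV hW, rfl⟩
    rwa [combine_completionCount, hVz, hWz] at h

private lemma zeta_K1 : zeta (⊥ : SimpleGraph (Fin 1)) = 0 := by
  have h0 : ∀ c : Fin 1 → ℕ, completionCount (⊥ : SimpleGraph (Fin 1)) c = 0 := by
    intro c
    have h : completionEdges (⊥ : SimpleGraph (Fin 1)) c = ∅ := by
      ext e
      simp only [completionEdges, Set.mem_setOf_eq, Set.mem_empty_iff_false, iff_false]
      rintro ⟨u, v, _, hne, _, _⟩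
      exact hne (Subsingleton.elim u v)
    simp [completionCount, h]
  apply Nat.le_antisymm
  · refine csSup_le (zetaSet_nonempty _) ?_
    rintro n ⟨c, _, rfl⟩
    simp [h0]
  · exact Nat.zero_le _

end Aux

/-- For finite simple graphs `G` and `H`, the join satisfies
`ζ(G + H) = ζ(G) + ζ(H)`; in particular `ζ(K₁ + H) = ζ(H)`. -/
theorem zeta_join {V W : Type} [Fintype V] [Fintype W]
    (G : SimpleGraph V) (H : SimpleGraph W) :
    zeta (graphJoin G H) = zeta G + zeta H ∧
    zeta (graphJoin (⊥ : SimpleGraph (Fin 1)) H) = zeta H := by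
  exact ⟨zeta_join_aux G H, by rw [zeta_join_aux, zeta_K1, zero_add]⟩
end
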